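/- Every UBS V ⊆ 𝒲 contains a minimal UBS. -/

import Mathlib

open Set

variable {X : Type*}

/-- A wall: a subset with nonempty complement and nonempty itself. -/
def IsWall (h : Set X) : Prop := h.Nonempty ∧ hᶜ.Nonempty

/-- Walls `h` and `k` cross. -/
def Crosses (h k : Set X) : Prop :=
  (h ∩ k).Nonempty ∧ (h ∩ kᶜ).Nonempty ∧ (hᶜ ∩ k).Nonempty ∧ (hᶜ ∩ kᶜ).Nonempty

/-- The wall `u` lies in the halfspace `H` of the wall `w`. -/
def LiesIn (u H w : Set X) : Prop := u ≠ w ∧ (u ⊆ H ∨ uᶜ ⊆ H)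

/-- The wall `w` separates the walls `u` and `v`. -/
def Separates (w u v : Set X) : Prop :=
  u ≠ v ∧ u ≠ w ∧ v ≠ w ∧
  ∃ u' v' w', (u' = u ∨ u' = uᶜ) ∧ (v' = v ∨ v' = vᶜ) ∧ (w' = w ∨ w' = wᶜ) ∧
    u' ⊆ w' ∧ v' ⊆ w'ᶜ

/-- `S` contains a facing triple. -/
def HasFacingTriple (S : Set (Set X)) : Prop :=
  ∃ a ∈ S, ∃ b ∈ S, ∃ c ∈ S, a ≠ b ∧ a ≠ c ∧ b ≠ c ∧
    ∃ a' b' c', (a' = a ∨ a' = aᶜ) ∧ (b' = b ∨ b' = bᶜ) ∧ (c' = c ∨ c' = cᶜ) ∧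
      Disjoint a' b' ∧ Disjoint a' c' ∧ Disjoint b' c'

/-- `S` is inseparable with respect to the wall collection `W`. -/
def InseparableIn (W S : Set (Set X)) : Prop :=
  ∀ u ∈ S, ∀ v ∈ S, ∀ w ∈ W, Separates w u v → w ∈ S

/-- `S` is unidirectional: for each wall `w ∈ S`, at most one of the two halfspaces of `w`
contains infinitely many walls of `S`. -/
def Unidirectional (S : Set (Set X)) : Prop :=
  ∀ w ∈ S, {u ∈ S | LiesIn u w w}.Finite ∨ {u ∈ S | LiesIn u wᶜ w}.Finite

/-- `V` is a UBS in the wall collection `W`. -/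
def IsUBS (W V : Set (Set X)) : Prop :=
  V ⊆ W ∧ V.Infinite ∧ InseparableIn W V ∧ Unidirectional V ∧ ¬ HasFacingTriple V

/-- Almost-equivalence of sets of walls. -/
def AlmostEq (S T : Set (Set X)) : Prop := (S \ T).Finite ∧ (T \ S).Finite

/-- `U` is a minimal UBS in `W`. -/
def MinUBS (W U : Set (Set X)) : Prop :=
  IsUBS W U ∧ ∀ U', IsUBS W U' → U' ⊆ U → AlmostEq U' U

/-- `A ≺ B`: every wall of `B` crosses all but finitely many walls of `A`. -/
def Prec (A B : Set (Set X)) : Prop := ∀ b ∈ B, {a ∈ A | ¬ Crosses b a}.Finite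

/-- Distinct members of `W` determine distinct partitions. -/
def Admissible (W : Set (Set X)) : Prop := ∀ h ∈ W, ∀ k ∈ W, h ≠ k → h ≠ kᶜ

/-- No infinite subset of `W` consists of pairwise-crossing walls. -/
def NoInfCross (W : Set (Set X)) : Prop := ∀ S ⊆ W, S.Pairwise Crosses → S.Finite

/-- `W` has dimension at most `D`: every pairwise-crossing subset has cardinality at most `D`. -/
def DimLE (W : Set (Set X)) (D : ℕ) : Prop :=
  ∀ S ⊆ W, S.Pairwise Crosses → S.Finite ∧ S.ncard ≤ D

/-- `c` is a chain: an injective sequence of walls with `c n` separating `c (n-1)` and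
`c (n+1)` for `n ≥ 1`. -/
def IsChainSeq (c : ℕ → Set X) : Prop :=
  Function.Injective c ∧ ∀ n, Separates (c (n + 1)) (c n) (c (n + 2))

/-- The chain `c` is inextensible in `S`: no wall of `S` has a halfspace containing every
term of `c`. -/
def InextensibleIn (S : Set (Set X)) (c : ℕ → Set X) : Prop :=
  ¬ ∃ w ∈ S, ∃ H, (H = w ∨ H = wᶜ) ∧ ∀ n, LiesIn (c n) H w

/-- The inseparable closure in `W` of a set `C` of walls. -/
def insepClosure (W C : Set (Set X)) : Set (Set X) :=
  ⋂₀ {S | C ⊆ S ∧ S ⊆ W ∧ InseparableIn W S}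

/-!
If `V` contained no minimal UBS, every UBS `U ⊆ V` would contain a wall `x` together with a
smaller UBS all of whose walls cross `x`; iterating yields infinitely many pairwise crossing
walls.

To find `x`, Ramsey's theorem (no facing triples, no infinite crossing families) gives an
increasing sequence of halfspaces `c n` of walls of `U`. Its inseparable closure `K` has only
walls with a halfspace squeezed between two of the `c n`; since `K` is not minimal it has a
sub-UBS `U'` with `K \ U'` infinite. If every `c m` lies in a squeezed halfspace of a wall of
`U'`, inseparability puts the walls of all late `c n` into `U'`, hence every wall of `K` squeezed
between late `c n`; otherwise some `c N` lies in no squeezed halfspace of a wall of `U'`. Either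
way infinitely many walls of `K` have no squeezed halfspace containing `c N`. By unidirectionality
almost none of them has one inside `c N` either, so they cross the wall of `c N`, and Ramsey
again turns them into an increasing sequence whose inseparable closure is the UBS we want.
-/

open Filter Function

theorem Ultrafilter.exists_eventually_eq {α κ : Type*} [Finite κ] (𝒰 : Ultrafilter α)
    (f : α → κ) : ∃ y, ∀ᶠ x in 𝒰, f x = y := by
  obtain ⟨y, hy⟩ := (𝒰.map f).eq_pure_of_finite
  exact ⟨y, show {y} ∈ 𝒰.map f by simp [hy]⟩

/-- Infinite Ramsey theorem for pairs, with finitely many colours. -/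
theorem exists_strictMono_forall_eq {κ : Type*} [Finite κ] (C : ℕ → ℕ → κ) :
    ∃ g : ℕ → ℕ, StrictMono g ∧ ∃ y, ∀ i j, i < j → C (g i) (g j) = y := by
  let 𝒰 := hyperfilter ℕ
  choose y hy using fun a => 𝒰.exists_eventually_eq (C a)
  obtain ⟨y₀, hy₀⟩ := 𝒰.exists_eventually_eq y
  -- colour `a` by the colour `y a` of almost all pairs `(a, x)`, then choose greedily
  obtain ⟨g, -, hg⟩ := exists_seq_of_forall_finset_exists (fun a => y a = y₀)
    (fun a x => a < x ∧ C a x = y₀) fun s hs =>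
      (hy₀.and <| (eventually_all_finset s).2 fun a ha =>
        ((eventually_gt_atTop a).filter_mono Nat.hyperfilter_le_atTop).and
          ((hy a).mono fun _ hx => hx.trans (hs a ha))).exists
  exact ⟨g, fun i j h => (hg i j h).1, y₀, fun i j h => (hg i j h).2⟩

theorem Set.Infinite.exists_injective_nat {α : Type*} {s : Set α} (hs : s.Infinite) :
    ∃ f : ℕ → α, Injective f ∧ ∀ n, f n ∈ s :=
  ⟨fun n => hs.natEmbedding s n, Subtype.val_injective.comp (hs.natEmbedding s).injective,
    fun n => (hs.natEmbedding s n).2⟩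

theorem exists_seq_of_forall_exists_subset {α : Type*} (r : α → α → Prop) {P : Set α → Prop}
    {V : Set α} (hV : P V)
    (step : ∀ U, P U → ∃ x ∈ U, ∃ U₁, P U₁ ∧ U₁ ⊆ U ∧ ∀ y ∈ U₁, r x y) :
    ∃ x : ℕ → α, (∀ n, x n ∈ V) ∧ ∀ m n, m < n → r (x m) (x n) := by
  choose pt hpt next hnext hsub hr using step
  let F : {U // P U} → {U // P U} := fun U => ⟨next U U.2, hnext U U.2⟩
  let U : ℕ → {U // P U} := fun n => F^[n] ⟨V, hV⟩
  have hanti : Antitone fun n => (U n).1 := antitone_nat_of_succ_le fun n => by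
    simp only [U, iterate_succ_apply']
    exact hsub _ _
  refine ⟨fun n => pt (U n) (U n).2, fun n => hanti (Nat.zero_le n) (hpt _ _),
    fun m n hmn => hr _ _ _ ?_⟩
  have := hanti hmn (hpt _ (U n).2)
  simpa only [U, iterate_succ_apply'] using this

def IsHalfspace (H w : Set X) : Prop := H = w ∨ H = wᶜ

namespace IsHalfspace

variable {H H' K u w : Set X}

theorem self (w : Set X) : IsHalfspace w w := Or.inl rfl

theorem compl (h : IsHalfspace H w) : IsHalfspace Hᶜ w := by
  rcases h with rfl | rfl
  exacts [Or.inr rfl, Or.inl (compl_compl _)]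

theorem symm (h : IsHalfspace H w) : IsHalfspace w H := by
  rcases h with rfl | rfl
  exacts [Or.inl rfl, Or.inr (compl_compl _).symm]

theorem trans (h : IsHalfspace H w) (h' : IsHalfspace w K) : IsHalfspace H K := by
  rcases h with rfl | rfl
  exacts [h', h'.compl]

theorem isWall (h : IsHalfspace H w) (hw : IsWall w) : IsWall H := by
  rcases h with rfl | rfl
  exacts [hw, ⟨hw.2, (compl_compl w).symm ▸ hw.1⟩]

theorem eq_of_subset (h : IsHalfspace H w) (h' : IsHalfspace H' w) (hne : H.Nonempty)
    (hsub : H ⊆ H') : H = H' := by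
  rcases h'.trans h.symm with rfl | rfl
  · rfl
  · obtain ⟨x, hx⟩ := hne
    exact absurd (hsub hx) (not_not.2 hx)

theorem liesIn (h : IsHalfspace H u) (hne : u ≠ w) (hsub : H ⊆ K) : LiesIn u K w := by
  rcases h with rfl | rfl
  exacts [⟨hne, Or.inl hsub⟩, ⟨hne, Or.inr hsub⟩]

end IsHalfspace

theorem IsWall.of_subset_of_subset {A B H : Set X} (hA : IsWall A) (hB : IsWall B)
    (hAH : A ⊆ H) (hHB : H ⊆ B) : IsWall H :=
  ⟨hA.1.mono hAH, hB.2.mono (compl_subset_compl.2 hHB)⟩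

section Crosses

variable {h k A E E' H K : Set X}

theorem Crosses.symm (hc : Crosses h k) : Crosses k h := by
  obtain ⟨h₁, h₂, h₃, h₄⟩ := hc
  rw [inter_comm] at h₁ h₂ h₃ h₄
  exact ⟨h₁, h₃, h₂, h₄⟩

theorem crosses_compl_left : Crosses hᶜ k ↔ Crosses h k := by
  simp only [Crosses, compl_compl]
  tauto

theorem crosses_compl_right : Crosses h kᶜ ↔ Crosses h k :=
  ⟨fun hc => crosses_compl_left.1 hc.symm |>.symm, fun hc => (crosses_compl_left.2 hc.symm).symm⟩

theorem IsHalfspace.crosses_iff (hH : IsHalfspace H h) (hK : IsHalfspace K k) :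
    Crosses H K ↔ Crosses h k := by
  rcases hH with rfl | rfl <;> rcases hK with rfl | rfl <;>
    simp only [crosses_compl_left, crosses_compl_right]

theorem crosses_iff : Crosses h k ↔ ¬ Disjoint h k ∧ ¬ h ⊆ k ∧ ¬ k ⊆ h ∧ ¬ Disjoint hᶜ kᶜ := by
  simp only [Crosses, not_disjoint_iff_nonempty_inter, ← sdiff_eq, sdiff_nonempty, inter_comm hᶜ k]

theorem not_crosses_self : ¬ Crosses h h := fun hc => (crosses_iff.1 hc).2.1 subset_rfl

theorem Crosses.of_subset_of_subset (hE : Crosses A E) (hE' : Crosses A E') (hEH : E ⊆ H)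
    (hHE' : H ⊆ E') : Crosses A H :=
  ⟨hE.1.mono (inter_subset_inter_right _ hEH),
    hE'.2.1.mono (inter_subset_inter_right _ (compl_subset_compl.2 hHE')),
    hE.2.2.1.mono (inter_subset_inter_right _ hEH),
    hE'.2.2.2.mono (inter_subset_inter_right _ (compl_subset_compl.2 hHE'))⟩

end Crosses

theorem NoInfCross.not_forall_lt_crosses {W : Set (Set X)} (hW : NoInfCross W) {w : ℕ → Set X}
    (hwW : ∀ n, w n ∈ W) : ¬ ∀ i j, i < j → Crosses (w i) (w j) := by
  intro hw
  have hw' : ∀ i j, i ≠ j → Crosses (w i) (w j) := fun i j hij =>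
    hij.lt_or_gt.elim (hw i j) fun h => (hw j i h).symm
  have hinj : Injective w := fun i j h => by_contra fun hij => not_crosses_self (h ▸ hw' i j hij)
  refine infinite_range_of_injective hinj (hW _ (range_subset_iff.2 hwW) ?_)
  rintro _ ⟨i, rfl⟩ _ ⟨j, rfl⟩ hne
  exact hw' i j (ne_of_apply_ne w hne)

theorem NoInfCross.exists_subseq_nested_or_disjoint {W : Set (Set X)} (hW : NoInfCross W)
    {w H : ℕ → Set X} (hwW : ∀ n, w n ∈ W) (hH : ∀ n, IsHalfspace (H n) (w n)) :
    ∃ g : ℕ → ℕ, StrictMono g ∧ (Monotone (H ∘ g) ∨ Antitone (H ∘ g) ∨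
      Pairwise (Disjoint on H ∘ g) ∨ Pairwise (Disjoint on fun n => (H (g n))ᶜ)) := by
  obtain ⟨g, hg, ⟨p₁, p₂, p₃, p₄⟩, hp⟩ := exists_strictMono_forall_eq fun i j =>
    (H i ⊆ H j, H j ⊆ H i, Disjoint (H i) (H j), Disjoint (H i)ᶜ (H j)ᶜ)
  simp only [Prod.mk.injEq, eq_iff_iff] at hp
  refine ⟨g, hg, ?_⟩
  by_cases h₁ : p₁
  · exact Or.inl (monotone_iff_forall_lt.2 fun i j hij => (hp i j hij).1.2 h₁)
  by_cases h₂ : p₂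
  · exact Or.inr (Or.inl (antitone_iff_forall_lt.2 fun i j hij => (hp i j hij).2.1.2 h₂))
  by_cases h₃ : p₃
  · exact Or.inr (Or.inr (Or.inl ((pairwise_disjoint_on _).2 fun i j hij =>
      (hp i j hij).2.2.1.2 h₃)))
  by_cases h₄ : p₄
  · exact Or.inr (Or.inr (Or.inr ((pairwise_disjoint_on _).2 fun i j hij =>
      (hp i j hij).2.2.2.2 h₄)))
  refine absurd (fun i j hij => ((hH (g i)).crosses_iff (hH (g j))).1 (crosses_iff.2 ?_))
    (hW.not_forall_lt_crosses fun n => hwW (g n))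
  exact ⟨mt (hp i j hij).2.2.1.1 h₃, mt (hp i j hij).1.1 h₁, mt (hp i j hij).2.1.1 h₂,
    mt (hp i j hij).2.2.2.1 h₄⟩

theorem hasFacingTriple_of_pairwise_disjoint {S : Set (Set X)} {w H : ℕ → Set X}
    (hwS : ∀ n, w n ∈ S) (hw : Injective w) (hH : ∀ n, IsHalfspace (H n) (w n))
    (hd : Pairwise (Disjoint on H)) : HasFacingTriple S :=
  ⟨w 0, hwS 0, w 1, hwS 1, w 2, hwS 2, hw.ne (by decide), hw.ne (by decide), hw.ne (by decide),
    H 0, H 1, H 2, hH 0, hH 1, hH 2, hd (by decide), hd (by decide), hd (by decide)⟩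

section Closure

variable {W C T U K : Set (Set X)}

theorem subset_insepClosure : C ⊆ insepClosure W C := fun _ hx => mem_sInter.2 fun _ hS => hS.1 hx

theorem insepClosure_subset (hCT : C ⊆ T) (hTW : T ⊆ W) (hT : InseparableIn W T) :
    insepClosure W C ⊆ T :=
  sInter_subset_of_mem ⟨hCT, hTW, hT⟩

theorem inseparableIn_insepClosure : InseparableIn W (insepClosure W C) :=
  fun u hu v hv w hw hsep => mem_sInter.2 fun S hS =>
    hS.2.2 u (mem_sInter.1 hu S hS) v (mem_sInter.1 hv S hS) w hw hsep

theorem Unidirectional.mono (hU : Unidirectional U) (hKU : K ⊆ U) : Unidirectional K :=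
  fun w hw => (hU w (hKU hw)).imp (fun hf => hf.subset fun _ hu => ⟨hKU hu.1, hu.2⟩)
    (fun hf => hf.subset fun _ hu => ⟨hKU hu.1, hu.2⟩)

theorem HasFacingTriple.mono (hK : HasFacingTriple K) (hKU : K ⊆ U) : HasFacingTriple U := by
  obtain ⟨a, ha, b, hb, c, hc, rest⟩ := hK
  exact ⟨a, hKU ha, b, hKU hb, c, hKU hc, rest⟩

theorem IsUBS.insepClosure_subset (hU : IsUBS W U) (hCU : C ⊆ U) : insepClosure W C ⊆ U :=
  _root_.insepClosure_subset hCU hU.1 hU.2.2.1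

theorem IsUBS.isUBS_insepClosure (hU : IsUBS W U) (hCU : C ⊆ U) (hC : C.Infinite) :
    IsUBS W (insepClosure W C) :=
  have hsub := hU.insepClosure_subset hCU
  ⟨hsub.trans hU.1, hC.mono subset_insepClosure, inseparableIn_insepClosure,
    hU.2.2.2.1.mono hsub, fun h => hU.2.2.2.2 (h.mono hsub)⟩

end Closure

theorem Unidirectional.finite_liesIn {U : Set (Set X)} {w H : Set X} (hU : Unidirectional U)
    (hw : w ∈ U) (hH : IsHalfspace H w) (hinf : {u ∈ U | LiesIn u Hᶜ w}.Infinite) :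
    {u ∈ U | LiesIn u H w}.Finite := by
  rcases hH with rfl | rfl
  · exact (hU _ hw).resolve_right hinf
  · rw [compl_compl] at hinf
    exact (hU _ hw).resolve_left hinf

theorem infinite_setOf_liesIn {U : Set (Set X)} {w H : ℕ → Set X} (hwU : ∀ n, w n ∈ U)
    (hw : Injective w) (hH : ∀ n, IsHalfspace (H n) (w n)) {K : Set X} (hK : ∀ n, H n ⊆ K)
    (v : Set X) : {u ∈ U | LiesIn u K v}.Infinite := by
  refine ((infinite_range_of_injective hw).sdiff (finite_singleton v)).mono ?_
  rintro _ ⟨⟨n, rfl⟩, hne⟩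
  exact ⟨hwU n, (hH n).liesIn hne (hK n)⟩

structure HalfspaceChain (S : Set (Set X)) where
  wall : ℕ → Set X
  half : ℕ → Set X
  wall_mem : ∀ n, wall n ∈ S
  wall_injective : Injective wall
  isHalfspace : ∀ n, IsHalfspace (half n) (wall n)
  half_isWall : ∀ n, IsWall (half n)
  monotone : Monotone half

theorem IsUBS.exists_halfspaceChain {W U : Set (Set X)} (hWwall : ∀ h ∈ W, IsWall h)
    (hWnic : NoInfCross W) (hU : IsUBS W U) : ∃ c : HalfspaceChain U, StrictMono c.half := by
  obtain ⟨hUW, hUinf, -, -, hUft⟩ := hU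
  obtain ⟨f, hf, hfU⟩ := hUinf.exists_injective_nat
  have hfW : ∀ n, f n ∈ W := fun n => hUW (hfU n)
  obtain ⟨g, hg, hinc | hdec | hdisj | hcodisj⟩ :=
    hWnic.exists_subseq_nested_or_disjoint hfW fun n => IsHalfspace.self (f n)
  · exact ⟨⟨f ∘ g, f ∘ g, fun n => hfU _, hf.comp hg.injective, fun n => .self _,
      fun n => hWwall _ (hfW _), hinc⟩, hinc.strictMono_of_injective (hf.comp hg.injective)⟩
  · have hmono : Monotone fun n => (f (g n))ᶜ := fun i j hij => compl_subset_compl.2 (hdec hij)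
    exact ⟨⟨f ∘ g, fun n => (f (g n))ᶜ, fun n => hfU _, hf.comp hg.injective,
      fun n => (IsHalfspace.self _).compl,
      fun n => (IsHalfspace.self _).compl.isWall (hWwall _ (hfW _)), hmono⟩,
      hmono.strictMono_of_injective (compl_injective.comp (hf.comp hg.injective))⟩
  · exact absurd (hasFacingTriple_of_pairwise_disjoint (fun n => hfU (g n))
      (hf.comp hg.injective) (fun n => .self _) hdisj) hUft
  · exact absurd (hasFacingTriple_of_pairwise_disjoint (fun n => hfU (g n))
      (hf.comp hg.injective) (fun n => (IsHalfspace.self _).compl) hcodisj) hUft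

namespace HalfspaceChain

variable {U U' W : Set (Set X)} (c : HalfspaceChain U)

def between (W : Set (Set X)) : Set (Set X) :=
  {w ∈ W | ∃ H, IsHalfspace H w ∧ ∃ a b, c.half a ⊆ H ∧ H ⊆ c.half b}

theorem inseparableIn_between : InseparableIn W (c.between W) := by
  rintro u ⟨-, Hu, hHu, au, bu, hau, hbu⟩ v ⟨-, Hv, hHv, av, bv, hav, hbv⟩ w hwW
    ⟨-, -, -, u', v', w', hu', hv', hw', hu'w', hv'w'⟩
  refine ⟨hwW, ?_⟩
  obtain ⟨x, hx⟩ := (c.half_isWall 0).1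
  obtain ⟨y, hy⟩ := (c.half_isWall (max bu bv)).2
  rcases IsHalfspace.trans hu' hHu.symm with rfl | rfl <;>
    rcases IsHalfspace.trans hv' hHv.symm with rfl | rfl
  · exact (hv'w' (hav (c.monotone (Nat.zero_le av) hx))
      (hu'w' (hau (c.monotone (Nat.zero_le au) hx)))).elim
  · exact ⟨w', hw', au, bv, hau.trans hu'w', (compl_subset_compl.1 hv'w').trans hbv⟩
  · exact ⟨w'ᶜ, IsHalfspace.compl hw', av, bu, hav.trans hv'w',
      (compl_subset_comm.1 hu'w').trans hbu⟩
  · exact (hv'w' (fun h => hy (c.monotone (le_max_right _ _) (hbv h)))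
      (hu'w' fun h => hy (c.monotone (le_max_left _ _) (hbu h)))).elim

theorem insepClosure_subset_between (hUW : U ⊆ W) :
    insepClosure W (range c.wall) ⊆ c.between W :=
  insepClosure_subset (range_subset_iff.2 fun n =>
    ⟨hUW (c.wall_mem n), c.half n, c.isHalfspace n, n, n, subset_rfl, subset_rfl⟩)
    (fun _ hw => hw.1) c.inseparableIn_between

theorem infinite_liesIn_compl {H : Set X} {b : ℕ} (hH : H ⊆ c.half b) (w : Set X) :
    {u ∈ U | LiesIn u Hᶜ w}.Infinite :=
  infinite_setOf_liesIn (fun n => c.wall_mem (b + n))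
    (c.wall_injective.comp (add_right_injective b))
    (fun n => (c.isHalfspace (b + n)).compl)
    (fun n => compl_subset_compl.2 (hH.trans (c.monotone (Nat.le_add_right b n)))) w

theorem finite_liesIn_half (hU : Unidirectional U) (N : ℕ) :
    {u ∈ U | LiesIn u (c.half N) (c.wall N)}.Finite :=
  hU.finite_liesIn (c.wall_mem N) (c.isHalfspace N) (c.infinite_liesIn_compl subset_rfl _)

theorem not_disjoint_of_half_subset {A B : Set X} {a b : ℕ} (hA : c.half a ⊆ A)
    (hB : c.half b ⊆ B) : ¬ Disjoint A B := by
  obtain ⟨x, hx⟩ := (c.half_isWall 0).1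
  exact not_disjoint_iff.2
    ⟨x, hA (c.monotone (Nat.zero_le a) hx), hB (c.monotone (Nat.zero_le b) hx)⟩

theorem not_disjoint_compl_of_subset_half {A B : Set X} {a b : ℕ} (hA : A ⊆ c.half a)
    (hB : B ⊆ c.half b) : ¬ Disjoint Aᶜ Bᶜ := by
  obtain ⟨x, hx⟩ := (c.half_isWall (max a b)).2
  exact not_disjoint_iff.2 ⟨x, fun h => hx (c.monotone (le_max_left a b) (hA h)),
    fun h => hx (c.monotone (le_max_right a b) (hB h))⟩

theorem exists_chain_in_between (hWnic : NoInfCross W) (hU : Unidirectional U) {T : Set (Set X)} (hTU : T ⊆ U) (hT : T.Infinite)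
    (hTc : T ⊆ c.between W) :
    ∃ e : HalfspaceChain U,
      ∀ n, e.wall n ∈ T ∧ ∃ a b, c.half a ⊆ e.half n ∧ e.half n ⊆ c.half b := by
  obtain ⟨f, hf, hfT⟩ := hT.exists_injective_nat
  choose H hH a b ha hb using fun n => (hTc (hfT n)).2
  obtain ⟨g, hg, hmono | hanti | hdisj | hcodisj⟩ :=
    hWnic.exists_subseq_nested_or_disjoint (fun n => (hTc (hfT n)).1) hH
  · exact ⟨⟨f ∘ g, H ∘ g, fun n => hTU (hfT _), hf.comp hg.injective, fun n => hH _,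
      fun n => (c.half_isWall _).of_subset_of_subset (c.half_isWall _) (ha _) (hb _), hmono⟩,
      fun n => ⟨hfT _, a _, b _, ha _, hb _⟩⟩
  · -- `H (g 0)` would contain infinitely many walls of `U` on either side
    exact absurd (infinite_setOf_liesIn (fun n => hTU (hfT (g n))) (hf.comp hg.injective)
      (fun n => hH (g n)) (fun n => hanti (Nat.zero_le n)) (f (g 0)))
      (not_infinite.2 (hU.finite_liesIn (hTU (hfT (g 0))) (hH (g 0))
        (c.infinite_liesIn_compl (hb (g 0)) _)))
  · exact absurd (hdisj zero_ne_one) (c.not_disjoint_of_half_subset (ha _) (ha _))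
  · exact absurd (hcodisj zero_ne_one) (c.not_disjoint_compl_of_subset_half (hb _) (hb _))

theorem exists_chain_crossing_half (hWnic : NoInfCross W) (hU : Unidirectional U) {T : Set (Set X)} (hTU : T ⊆ U) (hT : T.Infinite)
    (hTc : T ⊆ c.between W) (N : ℕ)
    (hN : ∀ w ∈ T, ∀ H, IsHalfspace H w → (∃ b, H ⊆ c.half b) → ¬ c.half N ⊆ H) :
    ∃ e : HalfspaceChain U, ∀ n, Crosses (c.half N) (e.half n) := by
  obtain ⟨e, he⟩ := c.exists_chain_in_between hWnic hU (sdiff_subset.trans hTU)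
    (hT.sdiff ((c.finite_liesIn_half hU N).insert (c.wall N))) (sdiff_subset.trans hTc)
  refine ⟨e, fun n => ?_⟩
  obtain ⟨⟨hnT, hnL⟩, a, b, ha, hb⟩ := he n
  refine crosses_iff.2 ⟨c.not_disjoint_of_half_subset subset_rfl ha,
    hN _ hnT _ (e.isHalfspace n) ⟨b, hb⟩, fun hsub => hnL ?_,
    c.not_disjoint_compl_of_subset_half subset_rfl hb⟩
  by_cases h : e.wall n = c.wall N
  · exact Or.inl h
  · exact Or.inr ⟨hTU hnT, (e.isHalfspace n).liesIn h hsub⟩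

theorem wall_mem_of_forall_exists_half_subset (hUW : U ⊆ W) (hc : StrictMono c.half) (hU' : InseparableIn W U') {u H : Set X} {b : ℕ} (hu : u ∈ U')
    (hH : IsHalfspace H u) (hHne : H.Nonempty) (hHb : H ⊆ c.half b)
    (hfreq : ∀ m, ∃ v ∈ U', ∃ K, IsHalfspace K v ∧ c.half m ⊆ K) (m : ℕ) (hm : b < m) :
    c.wall m ∈ U' := by
  by_contra hmU'
  obtain ⟨v, hv, K, hK, hmK⟩ := hfreq m
  have hHm : H ⊆ c.half m := hHb.trans (c.monotone hm.le)
  have huv : u ≠ v := by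
    rintro rfl
    have hHK : H = K := hH.eq_of_subset hK hHne (hHm.trans hmK)
    exact (hc hm).not_ge (hmK.trans (hHK ▸ hHb))
  exact hmU' (hU' u hu v hv _ (hUW (c.wall_mem m)) ⟨huv, ne_of_mem_of_not_mem hu hmU',
    ne_of_mem_of_not_mem hv hmU', H, Kᶜ, c.half m, hH, hK.compl, c.isHalfspace m, hHm,
    compl_subset_compl.2 hmK⟩)

theorem mem_of_forall_wall_mem (hU' : InseparableIn W U') {N : ℕ}
    (htail : ∀ m, N ≤ m → c.wall m ∈ U') {w H : Set X} {b : ℕ} (hw : w ∈ W)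
    (hH : IsHalfspace H w) (hNH : c.half N ⊆ H) (hHb : H ⊆ c.half b) : w ∈ U' := by
  set M := max b (N + 1)
  have hNM : N < M := Nat.lt_of_lt_of_le (Nat.lt_succ_self N) (le_max_right _ _)
  by_cases hN : w = c.wall N
  · exact hN ▸ htail N le_rfl
  by_cases hM : w = c.wall M
  · exact hM ▸ htail M hNM.le
  exact hU' _ (htail N le_rfl) _ (htail M hNM.le) w hw ⟨c.wall_injective.ne hNM.ne,
    Ne.symm hN, Ne.symm hM, c.half N, (c.half M)ᶜ, H, c.isHalfspace N, (c.isHalfspace M).compl,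
    hH, hNH, compl_subset_compl.2 (hHb.trans (c.monotone (le_max_left _ _)))⟩

theorem exists_infinite_not_half_subset (hUW : U ⊆ W) (hc : StrictMono c.half) {K : Set (Set X)} (hKc : K ⊆ c.between W) (hU'K : U' ⊆ K)
    (hU' : InseparableIn W U') (hU'inf : U'.Infinite) (hKU' : (K \ U').Infinite) :
    ∃ T ⊆ K, T.Infinite ∧
      ∃ N, ∀ w ∈ T, ∀ H, IsHalfspace H w → (∃ b, H ⊆ c.half b) → ¬ c.half N ⊆ H := by
  by_cases hfreq : ∀ m, ∃ v ∈ U', ∃ H, IsHalfspace H v ∧ c.half m ⊆ H ∧ ∃ b, H ⊆ c.half b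
  · obtain ⟨u, hu⟩ := hU'inf.nonempty
    obtain ⟨-, H, hH, a, b, ha, hb⟩ := hKc (hU'K hu)
    have htail := c.wall_mem_of_forall_exists_half_subset hUW hc hU' hu hH
      ((c.half_isWall a).1.mono ha) hb fun m => by
        obtain ⟨v, hv, H, hH, hmH, -⟩ := hfreq m
        exact ⟨v, hv, H, hH, hmH⟩
    refine ⟨K \ U', sdiff_subset, hKU', b + 1, ?_⟩
    rintro w ⟨hwK, hwU'⟩ Hw hHw ⟨b', hb'⟩ hsub
    exact hwU' (c.mem_of_forall_wall_mem hU' htail (hKc hwK).1 hHw hsub hb')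
  · push Not at hfreq
    obtain ⟨N, hN⟩ := hfreq
    exact ⟨U', hU'K, hU'inf, N, fun w hw H hH ⟨b, hb⟩ hNH => hN w hw H hH hNH b hb⟩

end HalfspaceChain

theorem IsUBS.exists_subUBS_crossing {W U : Set (Set X)} (hU : IsUBS W U)
    (e : HalfspaceChain U) {A : Set X} (he : ∀ n, Crosses A (e.half n)) :
    ∃ U₁, IsUBS W U₁ ∧ U₁ ⊆ U ∧ ∀ y ∈ U₁, Crosses A y := by
  have hCU : range e.wall ⊆ U := range_subset_iff.2 e.wall_mem
  refine ⟨_, hU.isUBS_insepClosure hCU (infinite_range_of_injective e.wall_injective),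
    hU.insepClosure_subset hCU, fun y hy => ?_⟩
  obtain ⟨-, H, hH, a, b, ha, hb⟩ := e.insepClosure_subset_between hU.1 hy
  exact ((IsHalfspace.self A).crosses_iff hH).1 ((he a).of_subset_of_subset (he b) ha hb)

theorem IsUBS.exists_wall_crossing_subUBS {W U : Set (Set X)} (hWwall : ∀ h ∈ W, IsWall h)
    (hWnic : NoInfCross W) (hU : IsUBS W U) (hmin : ∀ K ⊆ U, ¬ MinUBS W K) :
    ∃ x ∈ U, ∃ U₁, IsUBS W U₁ ∧ U₁ ⊆ U ∧ ∀ y ∈ U₁, Crosses x y := by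
  obtain ⟨c, hc⟩ := hU.exists_halfspaceChain hWwall hWnic
  have hCU : range c.wall ⊆ U := range_subset_iff.2 c.wall_mem
  set K := insepClosure W (range c.wall)
  have hKU : K ⊆ U := hU.insepClosure_subset hCU
  have hK : IsUBS W K := hU.isUBS_insepClosure hCU (infinite_range_of_injective c.wall_injective)
  have hKc : K ⊆ c.between W := c.insepClosure_subset_between hU.1
  obtain ⟨U', hU', hU'K, hnae⟩ : ∃ U', IsUBS W U' ∧ U' ⊆ K ∧ ¬ AlmostEq U' K := by
    simpa [MinUBS, hK] using hmin K hKU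
  have hKU' : (K \ U').Infinite := fun hfin => hnae ⟨by simp [sdiff_eq_empty.2 hU'K], hfin⟩
  obtain ⟨T, hTK, hT, N, hN⟩ :=
    c.exists_infinite_not_half_subset hU.1 hc hKc hU'K hU'.2.2.1 hU'.2.1 hKU'
  obtain ⟨e, he⟩ := c.exists_chain_crossing_half hWnic hU.2.2.2.1 (hTK.trans hKU) hT
    (hTK.trans hKc) N hN
  obtain ⟨U₁, hU₁, hU₁U, hcross⟩ := hU.exists_subUBS_crossing e he
  exact ⟨c.wall N, c.wall_mem N, U₁, hU₁, hU₁U,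
    fun y hy => ((c.isHalfspace N).crosses_iff (.self y)).1 (hcross y hy)⟩

theorem ubs_contains_minimal_general (W : Set (Set X))
    (hWwall : ∀ h ∈ W, IsWall h)
    (hWnic : NoInfCross W)
    (V : Set (Set X)) (hV : IsUBS W V) :
    ∃ U, U ⊆ V ∧ MinUBS W U := by
  by_contra! hno
  obtain ⟨x, hxV, hx⟩ := exists_seq_of_forall_exists_subset Crosses
    (P := fun U => IsUBS W U ∧ U ⊆ V) ⟨hV, subset_rfl⟩ fun U ⟨hU, hUV⟩ => by
      obtain ⟨x, hx, U₁, hU₁, hU₁U, hcross⟩ :=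
        hU.exists_wall_crossing_subUBS hWwall hWnic fun K hKU => hno K (hKU.trans hUV)
      exact ⟨x, hx, U₁, ⟨hU₁, hU₁U.trans hUV⟩, hU₁U, hcross⟩
  exact hWnic.not_forall_lt_crosses (fun n => hV.1 (hxV n)) hx

/-- Every UBS contains a minimal UBS. -/
theorem ubs_contains_minimal (W : Set (Set X))
    (hWc : W.Countable) (hWwall : ∀ h ∈ W, IsWall h)
    (hWadm : Admissible W) (hWnic : NoInfCross W)
    (V : Set (Set X)) (hV : IsUBS W V) :
    ∃ U, U ⊆ V ∧ MinUBS W U :=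
  ubs_contains_minimal_general W hWwall hWnic V hV
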